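/- Let X be a subshift such that there exist constants C, r > 0 with |L_n(X)| ≤ C·n^r·e^{n·h(X)} for every n, and let μ be an ergodic measure of maximal entropy on X. Then for every word w ∈ L(X) with μ([w]) > 0, there exists ε > 0 such that the number of words of length n in L(X) ending with w is greater than ε·n^{-1/2}·e^{n·h(X)} for all n ≥ |w|. -/

import Mathlib

/-!
By ergodicity there is a window length `W` such that, for every `n`, with probability close to `1`
the word `w` occurs in a point at some position in `[n - |w| - W, n - |w|)`. Since `H_n(μ) ≥ n h(X)`
while `|L_n(X)|` is only polynomially larger than `e^{n h(X)}`, the `n`-cylinders of measure above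
`n^{1/2} e^{-n h(X)}` carry mass at most `1 - 1/(4r+2)` for large `n`. Hence a definite mass lies on
cylinders of measure at most `n^{1/2} e^{-n h(X)}` that contain such an occurrence, so there are at
least a constant times `n^{-1/2} e^{n h(X)}` of them. Each is determined by a word of `L_n(X)`
ending with `w` (a left extension of its prefix up to the occurrence) and at most `W` further
letters. The finitely many remaining `n` are covered because `w` extends to the left to every
length.
-/

open Real Filter MeasureTheory

/-- The left shift map on bi-infinite sequences. -/
def shiftMap {A : Type*} (x : ℤ → A) : ℤ → A := fun i => x (i + 1)

/-- The word of length `n` read from `x` starting at position `i`. -/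
def wordAt {A : Type*} (x : ℤ → A) (i : ℤ) (n : ℕ) : List A :=
  List.ofFn (fun k : Fin n => x (i + (k : ℕ)))

/-- A word `w` belongs to the language of a set `S` of bi-infinite sequences if it
occurs somewhere in some point of `S`. -/
def InLangS {A : Type*} (S : Set (ℤ → A)) (w : List A) : Prop :=
  ∃ x ∈ S, ∃ i : ℤ, wordAt x i w.length = w

/-- Hamming distance between two words of the same length: the number of
positions at which they differ. -/
def listHamming {A : Type*} [DecidableEq A] (v w : List A) : ℕ :=
  (List.zipWith (fun a b => if a = b then 0 else 1) v w).sum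

/-- A subshift: a closed, shift-invariant set of bi-infinite sequences over a
finite (discrete) alphabet. -/
structure Subshift (A : Type*) [TopologicalSpace A] where
  carrier : Set (ℤ → A)
  isClosed : IsClosed carrier
  invariant : ∀ x ∈ carrier, shiftMap x ∈ carrier

/-- Topological entropy of (the language of) `S`, as the infimum of
`(1/n) log |L_n(S)|` (equal to the limit by subadditivity). -/
noncomputable def langEntropy {A : Type*} (S : Set (ℤ → A)) : ℝ :=
  ⨅ n : ℕ+, Real.log ({w : List A | w.length = (n : ℕ) ∧ InLangS S w}.ncard) / (n : ℝ)

/-- The cylinder set of points agreeing with `w : Fin n → A` on coordinates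
`0, …, n-1`. -/
def cylF {A : Type*} (n : ℕ) (w : Fin n → A) : Set (ℤ → A) :=
  {x : ℤ → A | ∀ i : Fin n, x ((i : ℕ) : ℤ) = w i}

/-- The cylinder set `[w]` of points beginning (at coordinate 0) with the word `w`. -/
def cylList {A : Type*} (w : List A) : Set (ℤ → A) :=
  {x : ℤ → A | wordAt x 0 w.length = w}

/-- The `n`-th partition entropy `H_n(μ) = -∑_{w ∈ A^n} μ[w] log μ[w]`. -/
noncomputable def partEntropy {A : Type*} [Fintype A] [MeasurableSpace A]
    (μ : MeasureTheory.Measure (ℤ → A)) (n : ℕ) : ℝ :=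
  ∑ w : Fin n → A, Real.negMulLog ((μ (cylF n w)).toReal)

/-- Measure-theoretic entropy of a shift-invariant measure, as
`inf_n H_n(μ)/n` (equal to the limit by subadditivity). -/
noncomputable def measEntropy {A : Type*} [Fintype A] [MeasurableSpace A]
    (μ : MeasureTheory.Measure (ℤ → A)) : ℝ :=
  ⨅ n : ℕ+, partEntropy μ (n : ℕ) / (n : ℝ)

section Words

variable {A : Type*}

lemma List.finite_length_eq_and [Finite A] (n : ℕ) (P : List A → Prop) :
    {u : List A | u.length = n ∧ P u}.Finite :=
  (List.finite_length_eq A n).subset fun _ h => h.1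

@[simp]
lemma length_wordAt (x : ℤ → A) (i : ℤ) (n : ℕ) : (wordAt x i n).length = n := by
  simp [wordAt]

lemma wordAt_add (x : ℤ → A) (i : ℤ) (a b : ℕ) :
    wordAt x i (a + b) = wordAt x i a ++ wordAt x (i + a) b := by
  simp only [wordAt, List.ofFn_add]
  congr 2 with k
  simp [add_assoc]

lemma InLangS.of_isPrefix {S : Set (ℤ → A)} {u v : List A} (hu : InLangS S u) (h : v <+: u) :
    InLangS S v := by
  obtain ⟨x, hx, i, hxi⟩ := hu
  obtain ⟨t, rfl⟩ := h
  refine ⟨x, hx, i, ?_⟩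
  rw [List.length_append, wordAt_add] at hxi
  exact (List.append_inj hxi (by simp)).1

lemma InLangS.exists_isSuffix {S : Set (ℤ → A)} {u : List A} (hu : InLangS S u) {n : ℕ}
    (hn : u.length ≤ n) : ∃ V : List A, V.length = n ∧ InLangS S V ∧ u <:+ V := by
  obtain ⟨x, hx, i, hxi⟩ := hu
  set i₀ := i - (n - u.length : ℕ)
  refine ⟨wordAt x i₀ n, length_wordAt .., ⟨x, hx, i₀, by simp⟩, wordAt x i₀ (n - u.length), ?_⟩
  conv_rhs => rw [← Nat.sub_add_cancel hn, wordAt_add]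
  simp [i₀, hxi]

/-- Such a word is `V.drop j` followed by the last `j` of its final `W` letters, where `V` is an
extension to the left of its prefix of length `n - j` to a word of `L_n(S)` ending with `w`. -/
lemma ncard_le_ncard_isSuffix_mul [Fintype A] (S : Set (ℤ → A)) (w : List A) {n W : ℕ}
    (hW : W ≤ n) :
    {u : List A | u.length = n ∧ InLangS S u ∧ ∃ j ≤ W, w <:+ u.take (n - j)}.ncard ≤
      {V : List A | V.length = n ∧ InLangS S V ∧ w <:+ V}.ncard *
        ((W + 1) * Fintype.card A ^ W) := by
  set T := {V : List A | V.length = n ∧ InLangS S V ∧ w <:+ V}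
  let R : List A × ℕ × List A → List A := fun ⟨V, j, t⟩ => V.drop j ++ t.drop (W - j)
  have hsub : {u : List A | u.length = n ∧ InLangS S u ∧ ∃ j ≤ W, w <:+ u.take (n - j)} ⊆
      R '' (T ×ˢ Set.Iic W ×ˢ {t : List A | t.length = W}) := by
    rintro u ⟨hlen, hu, j, hjW, hwj⟩
    obtain ⟨V, hVlen, hV, hpre⟩ := (hu.of_isPrefix (List.take_prefix _ u)).exists_isSuffix
      (n := n) (by simp [hlen])
    refine ⟨(V, j, u.drop (n - W)), ⟨⟨hVlen, hV, hwj.trans hpre⟩, hjW, by simp [hlen]; omega⟩, ?_⟩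
    have hV : V.drop j = u.take (n - j) := by
      rw [List.suffix_iff_eq_drop.mp hpre]
      simp [hlen, hVlen]
      omega
    simp only [R, hV, List.drop_drop]
    rw [show n - W + (W - j) = n - j by omega, List.take_append_drop]
  have hfin : (T ×ˢ Set.Iic W ×ˢ {t : List A | t.length = W}).Finite :=
    (List.finite_length_eq_and n _).prod
      ((Set.finite_Iic W).prod (List.finite_length_eq A W))
  have hcard : {t : List A | t.length = W}.ncard = Fintype.card A ^ W := by
    rw [← Nat.card_coe_set_eq]
    exact (Nat.card_eq_fintype_card (α := List.Vector A W)).trans (card_vector W)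
  calc _ ≤ (R '' (T ×ˢ Set.Iic W ×ˢ {t : List A | t.length = W})).ncard :=
        Set.ncard_le_ncard hsub (hfin.image R)
    _ ≤ (T ×ˢ Set.Iic W ×ˢ {t : List A | t.length = W}).ncard := Set.ncard_image_le hfin
    _ = _ := by rw [Set.ncard_prod, Set.ncard_prod, Set.ncard_Iic_nat, hcard]

lemma card_le_ncard_ofFn {n : ℕ} (t : Finset (Fin n → A)) {V : Set (List A)} (hV : V.Finite)
    (h : ∀ v ∈ t, List.ofFn v ∈ V) : t.card ≤ V.ncard := by
  rw [← Set.ncard_coe_finset]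
  exact Set.ncard_le_ncard_of_injOn _ h List.ofFn_injective.injOn hV

lemma shiftMap_iterate_apply (p : ℕ) (x : ℤ → A) (j : ℤ) : (shiftMap^[p] x) j = x (j + p) := by
  induction p generalizing x with
  | zero => simp
  | succ p ih =>
    rw [Function.iterate_succ_apply, ih]
    simp only [shiftMap, Nat.cast_succ]
    ring_nf

lemma mem_preimage_iterate_cylList {p : ℕ} {x : ℤ → A} {w : List A} :
    x ∈ shiftMap^[p] ⁻¹' cylList w ↔ wordAt x p w.length = w := by
  show wordAt (shiftMap^[p] x) 0 w.length = w ↔ _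
  simp only [wordAt, shiftMap_iterate_apply, zero_add]
  simp only [add_comm]

lemma isSuffix_take_wordAt {x : ℤ → A} {w : List A} {m n : ℕ} (hmn : m + w.length ≤ n)
    (h : wordAt x m w.length = w) : w <:+ (wordAt x 0 n).take (m + w.length) := by
  obtain ⟨d, rfl⟩ := Nat.exists_eq_add_of_le hmn
  rw [wordAt_add, List.take_left' (length_wordAt ..), wordAt_add, zero_add, h]
  exact List.suffix_append _ _

end Words

section FiniteSums

open Finset

variable {ι : Type*}

lemma sum_negMulLog_le (t : Finset ι) (p : ι → ℝ) (hp : ∀ i ∈ t, 0 ≤ p i) :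
    ∑ i ∈ t, negMulLog (p i) ≤ (∑ i ∈ t, p i) * log #t + negMulLog (∑ i ∈ t, p i) := by
  rcases t.eq_empty_or_nonempty with rfl | ht
  · simp
  have hc : (0 : ℝ) < #t := by exact_mod_cast ht.card_pos
  have hJensen := concaveOn_negMulLog.le_map_sum (t := t) (w := fun _ => (#t : ℝ)⁻¹) (p := p)
    (fun _ _ => by positivity) (by simp [hc.ne']) hp
  have hscale (m : ℝ) : negMulLog ((#t : ℝ)⁻¹ * m) = (#t : ℝ)⁻¹ * (m * log #t + negMulLog m) := by
    rw [negMulLog_mul]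
    simp only [negMulLog, log_inv]
    ring
  simp only [smul_eq_mul, ← mul_sum, hscale] at hJensen
  exact le_of_mul_le_mul_left hJensen (inv_pos.2 hc)

-- At most `1/s` entries exceed `s`: Jensen's bound `sum_negMulLog_le` on each of the two parts.
lemma sum_negMulLog_le_of_threshold (t : Finset ι) (p : ι → ℝ) (hp : ∀ i ∈ t, 0 ≤ p i)
    (hsum : ∑ i ∈ t, p i = 1) {s : ℝ} (hs : 0 < s) :
    ∑ i ∈ t, negMulLog (p i) ≤
      (∑ i ∈ t with s < p i, p i) * (-log s) + (1 - ∑ i ∈ t with s < p i, p i) * log #t + 2 := by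
  set m := ∑ i ∈ t with s < p i, p i
  have hsplit := sum_filter_add_sum_filter_not t (fun i => s < p i) p
  have hm0 : 0 ≤ m := sum_nonneg fun i hi => hp i (mem_filter.1 hi).1
  have hmass_thin : ∑ i ∈ t with ¬ s < p i, p i = 1 - m := by linarith
  have hthin0 : 0 ≤ 1 - m := hmass_thin ▸ sum_nonneg fun i hi => hp i (mem_filter.1 hi).1
  have hent_fat : ∑ i ∈ t with s < p i, negMulLog (p i) ≤ m * (-log s) + 1 := by
    refine (sum_negMulLog_le _ p fun i hi => hp i (mem_filter.1 hi).1).trans ?_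
    have hlog : m * log #{i ∈ t | s < p i} ≤ m * (-log s) := by
      rcases ({i ∈ t | s < p i}).eq_empty_or_nonempty with hF | hF
      · simp [m, hF]
      refine mul_le_mul_of_nonneg_left ?_ hm0
      have hcard : #{i ∈ t | s < p i} * s ≤ 1 := by
        have := card_nsmul_le_sum _ p s fun i (hi : i ∈ {i ∈ t | s < p i}) =>
          (mem_filter.1 hi).2.le
        rw [nsmul_eq_mul] at this
        linarith
      rw [← log_inv]
      exact log_le_log (by exact_mod_cast hF.card_pos) (by rwa [← one_div, le_div_iff₀ hs])
    linarith [negMulLog_le_one_sub_self hm0]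
  have hent_thin : ∑ i ∈ t with ¬ s < p i, negMulLog (p i) ≤ (1 - m) * log #t + 1 := by
    refine (sum_negMulLog_le _ p fun i hi => hp i (mem_filter.1 hi).1).trans ?_
    have hlog : log #{i ∈ t | ¬ s < p i} ≤ log #t := by
      rcases Nat.eq_zero_or_pos #{i ∈ t | ¬ s < p i} with h0 | hpos
      · rw [h0, Nat.cast_zero, log_zero]
        exact log_natCast_nonneg _
      exact log_le_log (by exact_mod_cast hpos) (by exact_mod_cast card_filter_le _ _)
    rw [hmass_thin]
    linarith [negMulLog_le_one_sub_self hthin0, mul_le_mul_of_nonneg_left hlog hthin0]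
  rw [← sum_filter_add_sum_filter_not t (fun i => s < p i)]
  linarith

lemma Finset.sum_filter_le_card_mul_add (t : Finset ι) (P : ι → Prop)
    [DecidablePred P] (p : ι → ℝ) (hp : ∀ i ∈ t, 0 ≤ p i) (s : ℝ) :
    ∑ i ∈ t with P i, p i ≤
      #{i ∈ t | P i ∧ ¬ s < p i ∧ p i ≠ 0} * s + ∑ i ∈ t with s < p i, p i := by
  rw [← sum_filter_add_sum_filter_not (t.filter P) (fun i => s < p i), add_comm]
  gcongr ?_ + ?_
  · rw [← sum_filter_ne_zero, filter_filter, filter_filter]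
    refine (sum_le_card_nsmul _ _ s fun i hi => ?_).trans_eq (nsmul_eq_mul _ _)
    exact not_lt.1 (mem_filter.1 hi).2.2.1
  · exact sum_le_sum_of_subset_of_nonneg (filter_subset_filter _ (filter_subset P t))
      fun i hi _ => hp i (mem_filter.1 hi).1

end FiniteSums

-- `1/(4r+2)` is the `δ` with `δ (r + 1/2) = 1/4`, so `m > 1 - δ` would force `L/4 < |c| + 2`.
lemma le_one_sub_of_mul_half_le {m L c r : ℝ} (hr : 0 < r) (hm0 : 0 ≤ m) (hm1 : m ≤ 1)
    (hL : 4 * |c| + 9 ≤ L) (h : m * (L / 2) ≤ (1 - m) * (c + r * L) + 2) :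
    m ≤ 1 - 1 / (4 * r + 2) := by
  rw [le_sub_iff_add_le, ← le_sub_iff_add_le', div_le_iff₀ (by positivity)]
  by_contra! hlt
  nlinarith [mul_le_mul_of_nonneg_left (le_abs_self c) (sub_nonneg.2 hm1),
    mul_nonneg (sub_nonneg.2 hlt.le) (show 0 ≤ L by linarith [abs_nonneg c]),
    mul_nonneg hm0 (abs_nonneg c)]

lemma exists_pos_forall_mul_lt_of_eventually {f g : ℕ → ℝ} {N : ℕ} (hf : ∀ n ≥ N, 0 < f n)
    (hg : ∀ n, 0 ≤ g n) {c : ℝ} (hev : ∀ᶠ n in atTop, c * g n < f n) (hc : 0 < c) :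
    ∃ ε > 0, ∀ n ≥ N, ε * g n < f n := by
  obtain ⟨M, hM⟩ := eventually_atTop.1 hev
  have hsmall : ∀ᶠ ε in nhds (0 : ℝ), ε ≤ c ∧ ∀ n ∈ Finset.Ico N M, ε * g n < f n := by
    refine (eventually_le_nhds hc).and ((eventually_all_finset _).2 fun n hn => ?_)
    have hlim : Tendsto (fun ε => ε * g n) (nhds 0) (nhds 0) :=
      (continuous_id.mul continuous_const).tendsto' 0 0 (zero_mul _)
    exact hlim.eventually (gt_mem_nhds (hf n (Finset.mem_Ico.1 hn).1))
  obtain ⟨ε, ⟨hεc, hεsmall⟩, hε⟩ := ((hsmall.filter_mono nhdsWithin_le_nhds).and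
    (self_mem_nhdsWithin (s := Set.Ioi 0))).exists
  refine ⟨ε, hε, fun n hn => ?_⟩
  rcases lt_or_ge n M with hnM | hnM
  · exact hεsmall n (Finset.mem_Ico.2 ⟨hn, hnM⟩)
  · exact (mul_le_mul_of_nonneg_right hεc (hg n)).trans_lt (hM n hnM)

lemma Ergodic.measure_iUnion_preimage_iterate {α : Type*} [MeasurableSpace α] {μ : Measure α}
    [IsProbabilityMeasure μ] {f : α → α} (hf : Ergodic f μ) {E : Set α} (hE : MeasurableSet E)
    (hE0 : μ E ≠ 0) : μ (⋃ q : ℕ, f^[q] ⁻¹' E) = 1 := by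
  set U := ⋃ q : ℕ, f^[q] ⁻¹' E
  have hU : MeasurableSet U := .iUnion fun q => hf.measurable.iterate q hE
  have hpre : f ⁻¹' U ⊆ U := by
    simp only [U, Set.preimage_iUnion, ← Set.preimage_comp, ← Function.iterate_succ]
    exact Set.iUnion_subset fun q => Set.subset_iUnion (fun q => f^[q] ⁻¹' E) (q + 1)
  rcases hf.ae_empty_or_univ_of_preimage_ae_le hU.nullMeasurableSet hpre.eventuallyLE with h | h
  · exact absurd (measure_mono_null (Set.subset_iUnion (fun q => f^[q] ⁻¹' E) 0)
      (by rw [measure_congr h, measure_empty])) hE0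
  · rw [measure_congr h, measure_univ]

lemma Ergodic.exists_lt_measureReal_iUnion_preimage_iterate {α : Type*} [MeasurableSpace α]
    {μ : Measure α} [IsProbabilityMeasure μ] {f : α → α} (hf : Ergodic f μ) {E : Set α}
    (hE : MeasurableSet E) (hE0 : μ E ≠ 0) {ε : ℝ} (hε : 0 < ε) :
    ∃ W : ℕ, ∀ a : ℕ, 1 - ε < μ.real (⋃ q < W, f^[q + a] ⁻¹' E) := by
  have hmono : Monotone fun Q : ℕ => ⋃ q < Q, f^[q] ⁻¹' E :=
    fun _ _ hQ => Set.biUnion_mono (fun _ hq => lt_of_lt_of_le hq hQ) fun _ _ => subset_rfl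
  have hlim := tendsto_measure_iUnion_atTop (μ := μ) hmono
  rw [Set.biUnion_lt_eq_iUnion, hf.measure_iUnion_preimage_iterate hE hE0] at hlim
  replace hlim := (ENNReal.tendsto_toReal ENNReal.one_ne_top).comp hlim
  rw [ENNReal.toReal_one] at hlim
  obtain ⟨W, hW⟩ := (hlim.eventually (lt_mem_nhds (sub_lt_self 1 hε))).exists
  refine ⟨W, fun a => ?_⟩
  have hshift : ⋃ q < W, f^[q + a] ⁻¹' E = f^[a] ⁻¹' ⋃ q < W, f^[q] ⁻¹' E := by
    simp only [Set.preimage_iUnion, ← Set.preimage_comp, Function.iterate_add]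
  have hU : MeasurableSet (⋃ q < W, f^[q] ⁻¹' E) :=
    .iUnion fun q => .iUnion fun _ => hf.measurable.iterate q hE
  rw [hshift, (hf.toMeasurePreserving.iterate a).measureReal_preimage hU.nullMeasurableSet]
  exact hW

section Cylinders

variable {A : Type*}

lemma measurableSet_cylF [MeasurableSpace A] [MeasurableSingletonClass A] (n : ℕ)
    (v : Fin n → A) : MeasurableSet (cylF n v) := by
  have : cylF n v = ⋂ i : Fin n, (fun x : ℤ → A => x i) ⁻¹' {v i} := by
    ext x
    simp [cylF]
  rw [this]
  exact .iInter fun i => measurable_pi_apply _ (measurableSet_singleton _)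

lemma pairwise_disjoint_cylF (n : ℕ) :
    Pairwise fun v₁ v₂ : Fin n → A => Disjoint (cylF n v₁) (cylF n v₂) :=
  fun _ _ hne => Set.disjoint_left.2 fun _ h₁ h₂ =>
    hne (funext fun i => (h₁ i).symm.trans (h₂ i))

lemma mem_cylF_self (x : ℤ → A) (n : ℕ) : x ∈ cylF n (fun i : Fin n => x i) :=
  fun _ => rfl

lemma wordAt_zero_eq_ofFn_iff {n : ℕ} {v : Fin n → A} {x : ℤ → A} :
    wordAt x 0 n = List.ofFn v ↔ x ∈ cylF n v := by
  simp [wordAt, List.ofFn_inj, funext_iff, cylF]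

lemma cylList_eq_cylF (w : List A) : cylList w = cylF w.length w.get := by
  ext x
  rw [← wordAt_zero_eq_ofFn_iff, List.ofFn_get]
  rfl

lemma measurableSet_cylList [MeasurableSpace A] [MeasurableSingletonClass A] (w : List A) :
    MeasurableSet (cylList w) :=
  cylList_eq_cylF w ▸ measurableSet_cylF _ _

variable [MeasurableSpace A] (μ : Measure (ℤ → A))

lemma measureReal_le_sum_cylF [IsFiniteMeasure μ] {n : ℕ} {E : Set (ℤ → A)}
    {P : Finset (Fin n → A)} (hE : ∀ x ∈ E, (fun i : Fin n => x i) ∈ P) :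
    μ.real E ≤ ∑ v ∈ P, μ.real (cylF n v) :=
  (measureReal_mono (fun x hx => Set.mem_biUnion (hE x hx) (mem_cylF_self x n))
    (measure_ne_top μ _)).trans
    (measureReal_biUnion_finset_le P _)

lemma partEntropy_nonneg [Fintype A] [IsProbabilityMeasure μ] (n : ℕ) : 0 ≤ partEntropy μ n :=
  Finset.sum_nonneg fun _ _ => negMulLog_nonneg measureReal_nonneg measureReal_le_one

lemma natCast_mul_measEntropy_le [Fintype A] [IsProbabilityMeasure μ] {n : ℕ} (hn : 1 ≤ n) :
    n * measEntropy μ ≤ partEntropy μ n := by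
  have hbdd : BddBelow (Set.range fun m : ℕ+ => partEntropy μ m / m) :=
    ⟨0, by rintro _ ⟨m, rfl⟩; exact div_nonneg (partEntropy_nonneg μ m) m.val.cast_nonneg⟩
  have hle : measEntropy μ ≤ partEntropy μ n / n := ciInf_le hbdd ⟨n, hn⟩
  rwa [le_div_iff₀ (by exact_mod_cast hn), mul_comm] at hle

variable [MeasurableSingletonClass A]

lemma sum_measureReal_cylF [Fintype A] [IsProbabilityMeasure μ] (n : ℕ) :
    ∑ v : Fin n → A, μ.real (cylF n v) = 1 := by
  rw [← measureReal_biUnion_finset (fun v₁ _ v₂ _ h => pairwise_disjoint_cylF n h)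
    fun v _ => measurableSet_cylF n v]
  convert probReal_univ (μ := μ)
  exact Set.eq_univ_of_forall fun x => Set.mem_biUnion (Finset.mem_univ _) (mem_cylF_self x n)

lemma inLangS_ofFn_of_measure_cylF_ne_zero [IsProbabilityMeasure μ] {S : Set (ℤ → A)}
    (hS : μ S = 1) {n : ℕ} {v : Fin n → A} (hv : μ (cylF n v) ≠ 0) :
    InLangS S (List.ofFn v) := by
  obtain ⟨x, hxS, hxv⟩ := nonempty_inter_of_measure_lt_add μ (measurableSet_cylF n v)
    (Set.subset_univ S) (Set.subset_univ _) (by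
      rw [hS, measure_univ]
      exact ENNReal.lt_add_right ENNReal.one_ne_top hv)
  exact ⟨x, hxS, 0, by rw [List.length_ofFn, wordAt_zero_eq_ofFn_iff.2 hxv]⟩

end Cylinders

section Main

open Finset

variable {A : Type*} [Fintype A] [MeasurableSpace A] [MeasurableSingletonClass A]
  (μ : Measure (ℤ → A)) [IsProbabilityMeasure μ] {S : Set (ℤ → A)}

lemma sum_measureReal_cylF_gt_le (hS : μ S = 1) {C r h : ℝ} (hC : 0 < C) (hr : 0 < r) {n : ℕ}
    (hn : 1 ≤ n) (hlog : 4 * |log C| + 9 ≤ log n)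
    (hcount : ({u : List A | u.length = n ∧ InLangS S u}.ncard : ℝ) ≤ C * n ^ r * exp (n * h))
    (hH : n * h ≤ partEntropy μ n) :
    ∑ v with ((n : ℝ) ^ (-(1 : ℝ) / 2) * exp (n * h))⁻¹ < μ.real (cylF n v),
      μ.real (cylF n v) ≤ 1 - 1 / (4 * r + 2) := by
  classical
  set p := fun v : Fin n → A => μ.real (cylF n v)
  set s := ((n : ℝ) ^ (-(1 : ℝ) / 2) * exp (n * h))⁻¹
  set t : Finset (Fin n → A) := {v | p v ≠ 0}
  have hn0 : (0 : ℝ) < n := by exact_mod_cast hn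
  have hs : 0 < s := by positivity
  have hsum : ∑ v ∈ t, p v = 1 := by rw [sum_filter_ne_zero]; exact sum_measureReal_cylF μ n
  have hent : ∑ v ∈ t, negMulLog (p v) = partEntropy μ n :=
    sum_filter_of_ne fun v _ hv hpv => hv (by simp [hpv])
  have hfat : ∑ v ∈ t with s < p v, p v = ∑ v with s < p v, p v := by
    rw [filter_filter]
    exact sum_congr (filter_congr fun v _ => ⟨fun h => h.2, fun h => ⟨(hs.trans h).ne', h⟩⟩)
      fun _ _ => rfl
  have hcard : (#t : ℝ) ≤ C * n ^ r * exp (n * h) := by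
    refine le_trans ?_ hcount
    exact_mod_cast card_le_ncard_ofFn t (List.finite_length_eq_and n _) fun v hv =>
      ⟨List.length_ofFn, inLangS_ofFn_of_measure_cylF_ne_zero μ hS fun h0 =>
        (mem_filter.1 hv).2 (by simp [p, Measure.real, h0])⟩
  have ht : (0 : ℝ) < #t := by
    exact_mod_cast card_pos.2 (nonempty_of_sum_ne_zero (hsum ▸ one_ne_zero))
  have hlogt : log #t ≤ log C + r * log n + n * h := by
    calc log #t ≤ log (C * n ^ r * exp (n * h)) := log_le_log ht hcard
      _ = _ := by rw [log_mul (by positivity) (by positivity), log_mul hC.ne' (by positivity),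
        log_rpow hn0, log_exp]
  have hlogs : -log s = n * h - log n / 2 := by
    rw [log_inv, neg_neg, log_mul (by positivity) (by positivity), log_rpow hn0, log_exp]
    ring
  have key := sum_negMulLog_le_of_threshold t p (fun v _ => measureReal_nonneg) hsum hs
  rw [hent, hlogs, hfat] at key
  have hm0 : 0 ≤ ∑ v with s < p v, p v := sum_nonneg fun v _ => measureReal_nonneg
  have hm1 : ∑ v with s < p v, p v ≤ 1 :=
    hfat ▸ hsum ▸ sum_le_sum_of_subset_of_nonneg (filter_subset _ t)
      fun v _ _ => measureReal_nonneg
  refine le_one_sub_of_mul_half_le hr hm0 hm1 hlog ?_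
  linarith [mul_le_mul_of_nonneg_left hlogt (sub_nonneg.2 hm1)]

lemma measureReal_window_le (hS : μ S = 1) (w : List A) {n W : ℕ} (hn : W + w.length ≤ n)
    {s : ℝ} (hs : 0 ≤ s) :
    μ.real (⋃ q < W, shiftMap^[q + (n - w.length - W)] ⁻¹' cylList w) ≤
      {V : List A | V.length = n ∧ InLangS S V ∧ w <:+ V}.ncard *
          ((W + 1) * Fintype.card A ^ W) * s +
        ∑ v with s < μ.real (cylF n v), μ.real (cylF n v) := by
  classical
  set p := fun v : Fin n → A => μ.real (cylF n v)
  set occ := fun u : List A => ∃ j ≤ W, w <:+ u.take (n - j)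
  have hwin : μ.real (⋃ q < W, shiftMap^[q + (n - w.length - W)] ⁻¹' cylList w) ≤
      ∑ v with occ (List.ofFn v), p v := by
    refine measureReal_le_sum_cylF μ fun x hx => ?_
    simp only [Set.mem_iUnion, mem_preimage_iterate_cylList] at hx
    obtain ⟨q, hq, hx⟩ := hx
    refine mem_filter.2 ⟨mem_univ _, W - q, Nat.sub_le _ _, ?_⟩
    rw [← wordAt_zero_eq_ofFn_iff.2 (mem_cylF_self x n)]
    convert isSuffix_take_wordAt (n := n) (by omega) hx using 2
    omega
  have hthin : #{v | occ (List.ofFn v) ∧ ¬ s < p v ∧ p v ≠ 0} ≤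
      {u : List A | u.length = n ∧ InLangS S u ∧ occ u}.ncard :=
    card_le_ncard_ofFn _ (List.finite_length_eq_and n _) fun v hv =>
      ⟨List.length_ofFn, inLangS_ofFn_of_measure_cylF_ne_zero μ hS
        fun h0 => (mem_filter.1 hv).2.2.2 (by simp [p, Measure.real, h0]), (mem_filter.1 hv).2.1⟩
  have hcount := ncard_le_ncard_isSuffix_mul S w (n := n) (W := W) (by omega)
  have hsplit := sum_filter_le_card_mul_add univ (fun v => occ (List.ofFn v)) p
    (fun v _ => measureReal_nonneg) s
  have hcard : (#{v | occ (List.ofFn v) ∧ ¬ s < p v ∧ p v ≠ 0} : ℝ) ≤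
      {V : List A | V.length = n ∧ InLangS S V ∧ w <:+ V}.ncard *
        ((W + 1) * Fintype.card A ^ W) := by
    exact_mod_cast hthin.trans hcount
  linarith [mul_le_mul_of_nonneg_right hcard hs]

theorem exists_pos_eventually_mul_lt_ncard_isSuffix (herg : Ergodic shiftMap μ) (hS : μ S = 1)
    {C r h : ℝ} (hC : 0 < C) (hr : 0 < r)
    (hcount : ∀ n : ℕ, 1 ≤ n →
      ({u : List A | u.length = n ∧ InLangS S u}.ncard : ℝ) ≤ C * n ^ r * exp (n * h))
    (hH : ∀ n : ℕ, 1 ≤ n → n * h ≤ partEntropy μ n) {w : List A} (hw : 0 < μ (cylList w)) :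
    ∃ c : ℝ, 0 < c ∧ ∀ᶠ n : ℕ in atTop, c * ((n : ℝ) ^ (-(1 : ℝ) / 2) * exp (n * h)) <
      {V : List A | V.length = n ∧ InLangS S V ∧ w <:+ V}.ncard := by
  set δ := 1 / (4 * r + 2)
  have hδ : 0 < δ := by positivity
  obtain ⟨W, hW⟩ := herg.exists_lt_measureReal_iUnion_preimage_iterate (measurableSet_cylList w)
    hw.ne' (half_pos hδ)
  have : Nonempty A := ⟨(nonempty_of_isProbabilityMeasure μ).some 0⟩
  set K : ℝ := (W + 1) * Fintype.card A ^ W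
  have hK : 0 < K := by positivity
  refine ⟨δ / (4 * K), by positivity, ?_⟩
  filter_upwards [eventually_ge_atTop (max 1 (W + w.length)),
    (tendsto_log_atTop.comp tendsto_natCast_atTop_atTop).eventually_ge_atTop (4 * |log C| + 9)]
    with n hn hlog
  have hn1 : 1 ≤ n := le_of_max_le_left hn
  set g := (n : ℝ) ^ (-(1 : ℝ) / 2) * exp (n * h)
  set T : ℝ := ({V : List A | V.length = n ∧ InLangS S V ∧ w <:+ V}.ncard : ℝ)
  have hg : 0 < g := by positivity
  have hfat : ∑ v with g⁻¹ < μ.real (cylF n v), μ.real (cylF n v) ≤ 1 - δ :=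
    sum_measureReal_cylF_gt_le μ hS hC hr hn1 hlog (hcount n hn1) (hH n hn1)
  have hwin : μ.real (⋃ q < W, shiftMap^[q + (n - w.length - W)] ⁻¹' cylList w) ≤
      T * K * g⁻¹ + ∑ v with g⁻¹ < μ.real (cylF n v), μ.real (cylF n v) :=
    measureReal_window_le μ hS w (le_of_max_le_right hn) (inv_nonneg.2 hg.le)
  have hTK : δ / 2 * g < T * K := by
    have := mul_lt_mul_of_pos_right
      (show δ / 2 < T * K * g⁻¹ by linarith [hW (n - w.length - W)]) hg
    rwa [mul_assoc _ g⁻¹, inv_mul_cancel₀ hg.ne', mul_one] at this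
  rw [div_mul_eq_mul_div, div_lt_iff₀ (by positivity)]
  linarith [mul_pos hδ hg]

end Main

theorem stmt9_general {A : Type*} [Fintype A]
    [TopologicalSpace A]
    [MeasurableSpace A] [MeasurableSingletonClass A]
    (X : Subshift A) (C r : ℝ) (hC : 0 < C) (hr : 0 < r)
    (hcount : ∀ n : ℕ, 1 ≤ n →
      (({w : List A | w.length = n ∧ InLangS X.carrier w}.ncard : ℝ)) ≤
        C * (n : ℝ) ^ r * Real.exp ((n : ℝ) * langEntropy X.carrier))
    (μ : MeasureTheory.Measure (ℤ → A)) (hprob : MeasureTheory.IsProbabilityMeasure μ)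
    (herg : Ergodic shiftMap μ)
    (hsupp : μ X.carrier = 1)
    (hmme : measEntropy μ = langEntropy X.carrier)
    (w : List A) (hw : InLangS X.carrier w) (hpos : 0 < μ (cylList w)) :
    ∃ ε : ℝ, 0 < ε ∧ ∀ n : ℕ, w.length ≤ n →
      ε * (n : ℝ) ^ (-(1 : ℝ) / 2) * Real.exp ((n : ℝ) * langEntropy X.carrier) <
        ({v : List A | v.length = n ∧ InLangS X.carrier v ∧ w <:+ v}.ncard : ℝ) := by
  obtain ⟨c, hc, hev⟩ := exists_pos_eventually_mul_lt_ncard_isSuffix μ herg hsupp hC hr hcount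
    (fun n hn => hmme ▸ natCast_mul_measEntropy_le μ hn) hpos
  have hT : ∀ n ≥ w.length,
      (0 : ℝ) < {v : List A | v.length = n ∧ InLangS X.carrier v ∧ w <:+ v}.ncard := by
    intro n hn
    obtain ⟨V, hV⟩ := hw.exists_isSuffix hn
    have hfin := List.finite_length_eq_and n fun v => InLangS X.carrier v ∧ w <:+ v
    exact_mod_cast (Set.ncard_pos hfin).2 ⟨V, hV⟩
  obtain ⟨ε, hε, hbound⟩ :=
    exists_pos_forall_mul_lt_of_eventually hT (fun n => by positivity) hev hc
  exact ⟨ε, hε, fun n hn => by simpa only [mul_assoc] using hbound n hn⟩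

/-- If `|L_n(X)| ≤ C n^r e^{n h(X)}` for all `n ≥ 1` and `μ` is an ergodic
measure of maximal entropy on `X`, then for every `w ∈ L(X)` with `μ([w]) > 0`
there is `ε > 0` such that the number of words of length `n` in `L(X)` ending
with `w` exceeds `ε · n^{-1/2} · e^{n h(X)}` for all `n ≥ |w|`. -/
theorem stmt9 {A : Type*} [Fintype A] [DecidableEq A]
    [TopologicalSpace A] [DiscreteTopology A]
    [MeasurableSpace A] [MeasurableSingletonClass A]
    (X : Subshift A) (C r : ℝ) (hC : 0 < C) (hr : 0 < r)
    (hcount : ∀ n : ℕ, 1 ≤ n →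
      (({w : List A | w.length = n ∧ InLangS X.carrier w}.ncard : ℝ)) ≤
        C * (n : ℝ) ^ r * Real.exp ((n : ℝ) * langEntropy X.carrier))
    (μ : MeasureTheory.Measure (ℤ → A)) (hprob : MeasureTheory.IsProbabilityMeasure μ)
    (herg : Ergodic shiftMap μ)
    (hsupp : μ X.carrier = 1)
    (hmme : measEntropy μ = langEntropy X.carrier)
    (w : List A) (hw : InLangS X.carrier w) (hpos : 0 < μ (cylList w)) :
    ∃ ε : ℝ, 0 < ε ∧ ∀ n : ℕ, w.length ≤ n →
      ε * (n : ℝ) ^ (-(1 : ℝ) / 2) * Real.exp ((n : ℝ) * langEntropy X.carrier) <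
        ({v : List A | v.length = n ∧ InLangS X.carrier v ∧ w <:+ v}.ncard : ℝ) :=
  stmt9_general X C r hC hr hcount μ hprob herg hsupp hmme w hw hpos
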